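/- Let f : E → [0,∞] be upper radial with 0 < sup f < ∞. Then (argmin f^Γ) × {inf f^Γ} ⊆ Γ((argmax f) × {sup f}), where argmax f = {x ∈ E : f(x) = sup f} and argmin f^Γ = {y ∈ E : f^Γ(y) = inf f^Γ}. If moreover for every y ∈ E the map v ↦ f^p(y,v) is strictly increasing on {v > 0 : 0 < f^p(y,v) < ∞}, then equality holds. -/

import Mathlib

open Set
open scoped ENNReal RealInnerProductSpace

noncomputable section

variable {E : Type*} [NormedAddCommGroup E] [InnerProductSpace ℝ E] [FiniteDimensional ℝ E]

/-- The radial point transformation `Γ(x,u) = (x/u, 1/u)`. -/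
def radialPoint (p : E × ℝ) : E × ℝ := (p.2⁻¹ • p.1, p.2⁻¹)

/-- The radial set transformation `ΓS = {Γ(x,u) : (x,u) ∈ S}`. -/
def radialSet (S : Set (E × ℝ)) : Set (E × ℝ) := radialPoint '' S

/-- The perspective function `f^p(y,v) = v·f(y/v)` (for `v > 0`). -/
def persp (f : E → ℝ≥0∞) (y : E) (v : ℝ) : ℝ≥0∞ := ENNReal.ofReal v * f (v⁻¹ • y)

/-- The upper radial transformation `f^Γ(y) = sup{v > 0 : v·f(y/v) ≤ 1}` (`sup ∅ = 0`). -/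
def radSup (f : E → ℝ≥0∞) (y : E) : ℝ≥0∞ :=
  ⨆ (v : ℝ) (_ : 0 < v) (_ : persp f y v ≤ 1), ENNReal.ofReal v

/-- `f` is upper radial: every `f^p(y,·)` is nondecreasing and upper semicontinuous on `ℝ₊₊`. -/
def UpperRadial (f : E → ℝ≥0∞) : Prop :=
  ∀ y : E, MonotoneOn (persp f y) (Ioi (0 : ℝ)) ∧
    UpperSemicontinuousOn (persp f y) (Ioi (0 : ℝ))

/-- Every `f^p(y,·)` is strictly increasing on its domain `{v > 0 : 0 < f^p(y,v) < ∞}`. -/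
def StrictPersp (f : E → ℝ≥0∞) : Prop :=
  ∀ y : E, StrictMonoOn (persp f y)
    {v : ℝ | 0 < v ∧ 0 < persp f y v ∧ persp f y v ≠ ⊤}

/-!
With `M = sup f` and `r = 1/M`, every `f^p(y, r) = r f(y/r) ≤ r M = 1`, so `f^Γ ≥ r`; and if `f(x)`
is close to `M`, monotonicity of `f^p(sx, ·)` past `s ≈ 1/f(x)` gives `f^Γ(sx) ≤ s`. Hence
`inf f^Γ = r`. At a minimizer `y`, upper semicontinuity forces `f^p(y, r) = 1`, i.e. `f(y/r) = M`.
Conversely, if `f(x) = M` then `f^p(rx, r) = 1`, and strict monotonicity makes `f^p(rx, v) > 1` for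
every `v > r`, so `f^Γ(rx) = r`.
-/

theorem ENNReal.ofReal_toReal_inv {a : ℝ≥0∞} (ha : a ≠ 0) : ENNReal.ofReal a.toReal⁻¹ = a⁻¹ := by
  rw [← ENNReal.toReal_inv, ENNReal.ofReal_toReal (ENNReal.inv_ne_top.2 ha)]

section Radial

variable {F : Type*} [NormedAddCommGroup F] [InnerProductSpace ℝ F] {f : F → ℝ≥0∞} {y : F}
  {s : ℝ}

theorem persp_smul_self (f : F → ℝ≥0∞) (x : F) (hs : s ≠ 0) :
    persp f (s • x) s = ENNReal.ofReal s * f x := by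
  rw [persp, smul_smul, inv_mul_cancel₀ hs, one_smul]

theorem persp_toReal_inv_iSup_le_one (f : F → ℝ≥0∞) (y : F) :
    persp f y (⨆ x, f x)⁻¹.toReal ≤ 1 :=
  calc persp f y (⨆ x, f x)⁻¹.toReal ≤ (⨆ x, f x)⁻¹ * ⨆ x, f x :=
        mul_le_mul' ENNReal.ofReal_toReal_le (le_iSup f _)
    _ ≤ 1 := ENNReal.inv_mul_le_one _

theorem ofReal_le_radSup {v : ℝ} (hv : 0 < v) (h : persp f y v ≤ 1) :
    ENNReal.ofReal v ≤ radSup f y :=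
  le_iSup₂_of_le v hv <| le_iSup_of_le h le_rfl

theorem radSup_le_ofReal (h : ∀ v, s < v → 1 < persp f y v) :
    radSup f y ≤ ENNReal.ofReal s :=
  iSup₂_le fun v _ => iSup_le fun hv =>
    ENNReal.ofReal_le_ofReal <| not_lt.1 fun hsv => (h v hsv).not_ge hv

theorem radSup_le_ofReal_of_one_lt (hmono : MonotoneOn (persp f y) (Ioi 0)) (hs : 0 < s)
    (h : 1 < persp f y s) : radSup f y ≤ ENNReal.ofReal s :=
  radSup_le_ofReal fun _ hsv => h.trans_le (hmono hs (hs.trans hsv) hsv.le)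

theorem radSup_le_ofReal_of_persp_eq_one (hmono : MonotoneOn (persp f y) (Ioi 0))
    (hstrict : StrictMonoOn (persp f y) {v | 0 < v ∧ 0 < persp f y v ∧ persp f y v ≠ ⊤})
    (hs : 0 < s) (h : persp f y s = 1) : radSup f y ≤ ENNReal.ofReal s := by
  refine radSup_le_ofReal fun v hsv => ?_
  have hv : 0 < v := hs.trans hsv
  have h1 : 1 ≤ persp f y v := h ▸ hmono hs hv hsv.le
  rcases eq_or_ne (persp f y v) ⊤ with htop | hfin
  · simp [htop]
  · exact h ▸ hstrict ⟨hs, by simp [h]⟩ ⟨hv, zero_lt_one.trans_le h1, hfin⟩ hsv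

theorem one_le_persp_of_radSup_le (husc : UpperSemicontinuousOn (persp f y) (Ioi 0))
    (hs : 0 < s) (h : radSup f y ≤ ENNReal.ofReal s) : 1 ≤ persp f y s := by
  by_contra! hlt
  obtain ⟨v, hv1, hsv⟩ : ∃ v, persp f y v < 1 ∧ s < v :=
    (((husc s hs 1 hlt).filter_mono (nhdsWithin_mono s (Ioi_subset_Ioi hs.le))).and
      self_mem_nhdsWithin).exists
  exact ((ENNReal.ofReal_lt_ofReal_iff_of_nonneg hs.le).2 hsv).not_ge
    ((ofReal_le_radSup (hs.trans hsv) hv1.le).trans h)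

theorem inv_iSup_le_radSup (hM0 : (⨆ x, f x) ≠ 0) (y : F) : (⨆ x, f x)⁻¹ ≤ radSup f y := by
  rcases eq_or_ne (⨆ x, f x) ⊤ with hMT | hMT
  · simp [hMT]
  rw [← ENNReal.ofReal_toReal (ENNReal.inv_ne_top.2 hM0)]
  exact ofReal_le_radSup (ENNReal.toReal_pos (ENNReal.inv_ne_zero.2 hMT)
    (ENNReal.inv_ne_top.2 hM0)) (persp_toReal_inv_iSup_le_one f y)

theorem iInf_radSup_le_inv_iSup (hmono : ∀ y, MonotoneOn (persp f y) (Ioi 0)) :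
    ⨅ y, radSup f y ≤ (⨆ x, f x)⁻¹ := by
  refine le_of_forall_gt_imp_ge_of_dense fun c hc => ?_
  obtain ⟨x, hx⟩ := lt_iSup_iff.1 (ENNReal.inv_lt_iff_inv_lt.1 hc)
  obtain ⟨s, -, hxs, hsc⟩ :=
    ENNReal.lt_iff_exists_real_btwn.1 (ENNReal.inv_lt_iff_inv_lt.1 hx)
  have hs : 0 < s := ENNReal.ofReal_pos.1 (pos_of_gt hxs)
  have h1 : 1 < persp f (s • x) s := by
    rw [persp_smul_self f x hs.ne', ← ENNReal.div_lt_iff (Or.inr one_ne_zero)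
      (Or.inr ENNReal.one_ne_top), one_div]
    exact hxs
  exact (iInf_le _ _).trans ((radSup_le_ofReal_of_one_lt (hmono _) hs h1).trans hsc.le)

theorem iInf_radSup (hmono : ∀ y, MonotoneOn (persp f y) (Ioi 0)) (hM0 : (⨆ x, f x) ≠ 0) :
    ⨅ y, radSup f y = (⨆ x, f x)⁻¹ :=
  (iInf_radSup_le_inv_iSup hmono).antisymm (le_iInf (inv_iSup_le_radSup hM0))

theorem apply_toReal_smul_eq_iSup (husc : UpperSemicontinuousOn (persp f y) (Ioi 0)) (hM0 : (⨆ x, f x) ≠ 0)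
    (hMT : (⨆ x, f x) ≠ ⊤) (hy : radSup f y = (⨆ x, f x)⁻¹) :
    f ((⨆ x, f x).toReal • y) = ⨆ x, f x := by
  have hr := ENNReal.ofReal_toReal_inv hM0
  have hper : persp f y (⨆ x, f x).toReal⁻¹ = 1 := by
    refine le_antisymm ?_ (one_le_persp_of_radSup_le husc
      (inv_pos.2 (ENNReal.toReal_pos hM0 hMT)) (hy.trans hr.symm).le)
    simpa [ENNReal.toReal_inv] using persp_toReal_inv_iSup_le_one f y
  rw [persp, hr, inv_inv] at hper
  exact inv_injective (ENNReal.eq_inv_of_mul_eq_one_left hper).symm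

theorem radSup_eq_inv_iSup (hmono : MonotoneOn (persp f y) (Ioi 0))
    (hstrict : StrictMonoOn (persp f y) {v | 0 < v ∧ 0 < persp f y v ∧ persp f y v ≠ ⊤})
    (hM0 : (⨆ x, f x) ≠ 0) (hMT : (⨆ x, f x) ≠ ⊤) (hy : f ((⨆ x, f x).toReal • y) = ⨆ x, f x) :
    radSup f y = (⨆ x, f x)⁻¹ := by
  have hr := ENNReal.ofReal_toReal_inv hM0
  have hper : persp f y (⨆ x, f x).toReal⁻¹ = 1 := by
    rw [persp, hr, inv_inv, hy, ENNReal.inv_mul_cancel hM0 hMT]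
  refine le_antisymm ?_ (inv_iSup_le_radSup hM0 y)
  exact hr ▸ radSup_le_ofReal_of_persp_eq_one hmono hstrict
    (inv_pos.2 (ENNReal.toReal_pos hM0 hMT)) hper

theorem radialSet_setOf_snd_eq {P : F → Prop} {c : ℝ} (hc : c ≠ 0) :
    radialSet {p : F × ℝ | P p.1 ∧ p.2 = c} = {p | P (c • p.1) ∧ p.2 = c⁻¹} := by
  ext ⟨y, t⟩
  simp only [radialSet, radialPoint, mem_image, mem_ofPred_eq, Prod.exists, Prod.mk.injEq]
  constructor
  · rintro ⟨x, _, ⟨hx, rfl⟩, rfl, rfl⟩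
    simpa [smul_smul, hc] using hx
  · rintro ⟨hy, rfl⟩
    exact ⟨c • y, c, ⟨hy, rfl⟩, by simp [smul_smul, hc], rfl⟩

end Radial

/-- For upper radial `f` with `0 < sup f < ∞`,
`(argmin f^Γ) × {inf f^Γ} ⊆ Γ((argmax f) × {sup f})`, with equality when every
`f^p(y,·)` is strictly increasing on its domain. -/
theorem radial_minimizers (f : E → ℝ≥0∞) (hrad : UpperRadial f)
    (hsup0 : (⨆ x : E, f x) ≠ 0) (hsupT : (⨆ x : E, f x) ≠ ⊤) :
    ({p : E × ℝ | radSup f p.1 = ⨅ y : E, radSup f y ∧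
        p.2 = (⨅ y : E, radSup f y).toReal} ⊆
      radialSet {p : E × ℝ | f p.1 = ⨆ x : E, f x ∧ p.2 = (⨆ x : E, f x).toReal}) ∧
    (StrictPersp f →
      {p : E × ℝ | radSup f p.1 = ⨅ y : E, radSup f y ∧
          p.2 = (⨅ y : E, radSup f y).toReal} =
        radialSet {p : E × ℝ | f p.1 = ⨆ x : E, f x ∧ p.2 = (⨆ x : E, f x).toReal}) := by
  rw [iInf_radSup (fun y => (hrad y).1) hsup0, radialSet_setOf_snd_eq (P := (f · = ⨆ x, f x))
    (ENNReal.toReal_ne_zero.2 ⟨hsup0, hsupT⟩), ENNReal.toReal_inv]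
  have hsub : {p : E × ℝ | radSup f p.1 = (⨆ x, f x)⁻¹ ∧ p.2 = (⨆ x, f x).toReal⁻¹} ⊆
      {p | f ((⨆ x, f x).toReal • p.1) = ⨆ x, f x ∧ p.2 = (⨆ x, f x).toReal⁻¹} :=
    fun p ⟨hp, ht⟩ => ⟨apply_toReal_smul_eq_iSup (hrad _).2 hsup0 hsupT hp, ht⟩
  refine ⟨hsub, fun hstrict => hsub.antisymm fun p ⟨hp, ht⟩ => ?_⟩
  exact ⟨radSup_eq_inv_iSup (hrad _).1 (hstrict _) hsup0 hsupT hp, ht⟩
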